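/- arXiv:2407.02175 — 4 statements merged into one kernel-verified Lean document; each statement's English description precedes it below -/
import Mathlib

section
/- Let T be a nonempty discrete/continuous set of time events in [t_st, t_end] with clock function τ. If max T = t_end, then the image of [t_st, t_end] under τ equals T, i.e. τ([t_st, t_end]) = T. -/
open Set

/-- The set of accumulation points of `T ⊆ ℝ`. -/
def AccPts (T : Set ℝ) : Set ℝ :=
  {t | ∀ δ : ℝ, 0 < δ → ∃ s ∈ T, s ≠ t ∧ s ∈ Set.Ioo (t - δ) (t + δ)}

/-- `T` is a discrete/continuous set of time events in `[tst, tend]`: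
a pairwise disjoint union of single instants `a j` (`j ∈ N`) and nondegenerate
closed intervals `[b k, c k]` (`k ∈ M`), whose accumulation points all lie in
one of the intervals. -/
def IsDiscrCont (tst tend : ℝ) (T : Set ℝ) : Prop :=
  T ⊆ Set.Icc tst tend ∧
  ∃ (N M : Set ℕ) (a b c : ℕ → ℝ),
    (∀ k ∈ M, b k < c k) ∧
    T = (⋃ j ∈ N, {a j}) ∪ (⋃ k ∈ M, Set.Icc (b k) (c k)) ∧
    (∀ j ∈ N, ∀ j' ∈ N, j ≠ j' → a j ≠ a j') ∧
    (∀ k ∈ M, ∀ k' ∈ M, k ≠ k' →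
      Disjoint (Set.Icc (b k) (c k)) (Set.Icc (b k') (c k'))) ∧
    (∀ j ∈ N, ∀ k ∈ M, a j ∉ Set.Icc (b k) (c k)) ∧
    (∀ t ∈ AccPts T, ∃ k ∈ M, t ∈ Set.Icc (b k) (c k))

/-- The clock function generated by `T`: `τ(t) = inf {s ∈ T | s ≥ t}`,
with values in the extended reals (`inf ∅ = +∞ = ⊤`). -/
noncomputable def clockFun (T : Set ℝ) (t : ℝ) : EReal :=
  sInf (Real.toEReal '' (T ∩ Set.Ici t))


/-- If `max T = t_end`, then `τ([t_st, t_end]) = T`. -/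
theorem clockFun_image_eq (tst tend : ℝ) (h : tst < tend) (T : Set ℝ)
    (hT : IsDiscrCont tst tend T) (hne : T.Nonempty)
    (hmax : IsGreatest T tend) :
    clockFun T '' Set.Icc tst tend = Real.toEReal '' T := by
  obtain ⟨hsub, N, M, a, b, c, hbc, hTeq, _, _, _, hacc⟩ := hT
  have key : ∀ t, t ≤ tend → IsLeast (T ∩ Set.Ici t) (sInf (T ∩ Set.Ici t)) := by
    intro t ht
    set S := T ∩ Set.Ici t with hS
    have hSne : S.Nonempty := ⟨tend, hmax.1, ht⟩
    have hbdd : BddBelow S := ⟨tst, fun x hx => (hsub hx.1).1⟩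
    have hge : t ≤ sInf S := le_csInf hSne (fun x hx => hx.2)
    have hmem : sInf S ∈ T := by
      by_contra hmT
      have hAcc : sInf S ∈ AccPts T := by
        intro δ hδ
        obtain ⟨s, hsS, hs⟩ := exists_lt_of_csInf_lt hSne
          (by linarith : sInf S < sInf S + δ)
        refine ⟨s, hsS.1, ?_, Set.mem_Ioo.mpr ⟨?_, hs⟩⟩
        · rintro rfl; exact hmT hsS.1
        · have := csInf_le hbdd hsS; linarith
      obtain ⟨k, hk, hmemk⟩ := hacc _ hAcc
      apply hmT
      rw [hTeq]
      exact Or.inr (Set.mem_biUnion hk hmemk)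
    exact ⟨⟨hmem, hge⟩, fun x hx => csInf_le hbdd hx⟩
  have clock_eq : ∀ {t m : ℝ}, IsLeast (T ∩ Set.Ici t) m →
      clockFun T t = (m : EReal) := by
    intro t m hm
    refine IsLeast.csInf_eq (α := EReal) ⟨⟨m, hm.1, rfl⟩, ?_⟩
    rintro x ⟨y, hy, rfl⟩
    exact EReal.coe_le_coe_iff.mpr (hm.2 hy)
  ext x
  constructor
  · rintro ⟨t, ht, rfl⟩
    exact ⟨sInf (T ∩ Set.Ici t), (key t ht.2).1.1, (clock_eq (key t ht.2)).symm⟩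
  · rintro ⟨s, hsT, rfl⟩
    exact ⟨s, hsub hsT, clock_eq ⟨⟨hsT, le_refl s⟩, fun x hx => hx.2⟩⟩
end

section
/- Let T be a nonempty discrete/continuous set of time events in [t_st, t_end] with clock function τ. If max T < t_end, then the image of [t_st, t_end] under τ equals T ∪ {+∞}, i.e. τ([t_st, t_end]) = T ∪ {+∞}. -/
open Set

lemma isClosed_of_discrCont {tst tend : ℝ} {T : Set ℝ} (hT : IsDiscrCont tst tend T) :
    IsClosed T := by
  obtain ⟨hsub, N, M, a, b, c, hbc, hTeq, h1, h2, h3, hacc⟩ := hT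
  apply isClosed_of_closure_subset
  intro t ht
  by_cases htT : t ∈ T
  · exact htT
  · have hA : t ∈ AccPts T := by
      intro δ hδ
      obtain ⟨s, hs, hd⟩ := Metric.mem_closure_iff.mp ht δ hδ
      rw [Real.dist_eq, abs_lt] at hd
      exact ⟨s, hs, fun hst => htT (hst ▸ hs), by constructor <;> linarith [hd.1, hd.2]⟩
    obtain ⟨k, hk, htk⟩ := hacc t hA
    rw [hTeq]
    exact Or.inr (mem_iUnion₂.mpr ⟨k, hk, htk⟩)

/-- If `max T < t_end`, then `τ([t_st, t_end]) = T ∪ {+∞}`. -/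
theorem clockFun_image_eq_union_top (tst tend : ℝ) (h : tst < tend) (T : Set ℝ)
    (hT : IsDiscrCont tst tend T) (hne : T.Nonempty)
    (m : ℝ) (hmax : IsGreatest T m) (hm : m < tend) :
    clockFun T '' Set.Icc tst tend = Real.toEReal '' T ∪ {⊤} := by
  have hclosed := isClosed_of_discrCont hT
  have htle : tst ≤ tend := h.le
  apply Set.Subset.antisymm
  · rintro x ⟨t, ht, rfl⟩
    by_cases hS : (T ∩ Set.Ici t).Nonempty
    · left
      have hbdd : BddBelow (T ∩ Set.Ici t) := ⟨t, fun s hs => hs.2⟩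
      have hcl : IsClosed (T ∩ Set.Ici t) := hclosed.inter isClosed_Ici
      have hmem := hcl.csInf_mem hS hbdd
      refine ⟨sInf (T ∩ Set.Ici t), hmem.1, ?_⟩
      have hle : IsLeast (Real.toEReal '' (T ∩ Set.Ici t))
          (Real.toEReal (sInf (T ∩ Set.Ici t))) := by
        constructor
        · exact ⟨_, hmem, rfl⟩
        · rintro y ⟨s, hs, rfl⟩
          exact_mod_cast csInf_le hbdd hs
      exact hle.csInf_eq.symm
    · right
      have hS' : T ∩ Set.Ici t = ∅ := Set.not_nonempty_iff_eq_empty.mp hS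
      simp [clockFun, hS']
  · rintro x (⟨s, hs, rfl⟩ | hx)
    · refine ⟨s, hT.1 hs, ?_⟩
      have hle : IsLeast (Real.toEReal '' (T ∩ Set.Ici s)) (Real.toEReal s) := by
        constructor
        · exact ⟨s, ⟨hs, le_refl s⟩, rfl⟩
        · rintro y ⟨u, hu, rfl⟩
          exact_mod_cast hu.2
      exact hle.csInf_eq
    · refine ⟨tend, ⟨htle, le_refl tend⟩, ?_⟩
      have hempty : T ∩ Set.Ici tend = ∅ := by
        ext u
        simp only [mem_inter_iff, mem_Ici, mem_empty_iff_false, iff_false, not_and]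
        intro hu hge
        exact absurd (hmax.2 hu) (by linarith)
      rw [mem_singleton_iff] at hx
      simp [clockFun, hempty, hx]
end

section
/- Let T be a nonempty discrete/continuous set of time events in [t_st, t_end] with clock function τ. Then T = τ([t_st, t_end]) \ {+∞}. Consequently, the clock function uniquely determines its set of time events: if T₁ and T₂ are nonempty discrete/continuous sets of time events in [t_st, t_end] generating the same clock function, then T₁ = T₂. -/
open Set

lemma clockFun_eq_min {T : Set ℝ} {t m : ℝ} (hm : m ∈ T ∩ Set.Ici t)
    (hlb : ∀ s ∈ T ∩ Set.Ici t, m ≤ s) : clockFun T t = (m : EReal) := by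
  apply le_antisymm
  · exact sInf_le ⟨m, hm, rfl⟩
  · apply le_sInf
    rintro x ⟨s, hs, rfl⟩
    exact_mod_cast hlb s hs

lemma clockFun_image {tst tend : ℝ} {T : Set ℝ} (hT : IsDiscrCont tst tend T) :
    Real.toEReal '' T = (clockFun T '' Set.Icc tst tend) \ {⊤} := by
  ext x
  constructor
  · rintro ⟨t, htT, rfl⟩
    have htmem : t ∈ Set.Icc tst tend := hT.1 htT
    have heq : clockFun T t = (t : EReal) :=
      clockFun_eq_min ⟨htT, le_refl t⟩ (fun s hs => hs.2)
    exact ⟨⟨t, htmem, heq⟩, by simp⟩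
  · rintro ⟨⟨t, htmem, rfl⟩, htop⟩
    have hne : (T ∩ Set.Ici t).Nonempty := by
      by_contra hemp
      rw [Set.not_nonempty_iff_eq_empty] at hemp
      apply htop
      simp [clockFun, hemp]
    have hcl : IsClosed (T ∩ Set.Ici t) :=
      (isClosed_of_discrCont hT).inter isClosed_Ici
    have hbdd : BddBelow (T ∩ Set.Ici t) := ⟨t, fun s hs => hs.2⟩
    have hmem := hcl.csInf_mem hne hbdd
    exact ⟨sInf (T ∩ Set.Ici t), hmem.1,
      (clockFun_eq_min hmem (fun s hs => csInf_le hbdd hs)).symm⟩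


/-- `T = τ([t_st, t_end]) \ {+∞}`; consequently the clock function uniquely
determines its set of time events: two nonempty discrete/continuous sets of
time events generating the same clock function coincide. -/
theorem clockFun_determines_events (tst tend : ℝ) (h : tst < tend) :
    (∀ T : Set ℝ, IsDiscrCont tst tend T → T.Nonempty →
      Real.toEReal '' T = (clockFun T '' Set.Icc tst tend) \ {⊤}) ∧
    (∀ T₁ T₂ : Set ℝ, IsDiscrCont tst tend T₁ → IsDiscrCont tst tend T₂ →
      T₁.Nonempty → T₂.Nonempty →
      (∀ t ∈ Set.Icc tst tend, clockFun T₁ t = clockFun T₂ t) → T₁ = T₂) := by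
  constructor
  · intro T hT _
    exact clockFun_image hT
  · intro T₁ T₂ h₁ h₂ _ _ heq
    have e1 := clockFun_image h₁
    have e2 := clockFun_image h₂
    have himg : clockFun T₁ '' Set.Icc tst tend = clockFun T₂ '' Set.Icc tst tend :=
      Set.image_congr heq
    have himg2 : Real.toEReal '' T₁ = Real.toEReal '' T₂ := by rw [e1, e2, himg]
    exact Set.image_injective.mpr (fun a b hab => by exact_mod_cast hab) himg2
end

section
/- Let F, G : [t_st, t_end] × ℝⁿ → ℝⁿ be continuous. If for every continuous function y : [t_st, t_end] → ℝⁿ and every s ∈ [t_st, t_end] one has ∫_{t_st}^{s} F(τ, y(τ)) dτ = ∫_{t_st}^{s} G(τ, y(τ)) dτ, then F = G on [t_st, t_end] × ℝⁿ. In other words, the map sending a continuous right-hand side F to the transition functional f(s, y) := y(t_st) + ∫_{t_st}^{s} F(τ, y(τ)) dτ is injective. -/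
/-!
Testing the hypothesis on constant trajectories `y ≡ v` shows that `τ ↦ F τ v` and `τ ↦ G τ v`
have the same primitive on `[t_st, t_end]`. Both are continuous, so by the fundamental theorem of
calculus each is the derivative of that primitive within the interval, which is unique since the
interval is nondegenerate.
-/

open Set

section IntervalIntegral

variable {E : Type*} [NormedAddCommGroup E] [NormedSpace ℝ E] [CompleteSpace E]
  {f g : ℝ → E} {a b t : ℝ}

theorem ContinuousOn.hasDerivWithinAt_integral_Icc (hf : ContinuousOn f (Icc a b))
    (ht : t ∈ Icc a b) :
    HasDerivWithinAt (fun u => ∫ x in a..u, f x) (f t) (Icc a b) t := by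
  -- provides the `FTCFilter` instance for `𝓝[Icc a b] t`
  have : Fact (t ∈ Icc a b) := ⟨ht⟩
  have hint : IntervalIntegrable f MeasureTheory.volume a t :=
    (hf.mono <| by rw [uIcc_of_le ht.1]; exact Icc_subset_Icc_right ht.2).intervalIntegrable
  exact intervalIntegral.integral_hasDerivWithinAt_right hint
    (hf.stronglyMeasurableAtFilter_nhdsWithin measurableSet_Icc t) (hf t ht)

theorem Set.EqOn.of_integral_eq (hab : a < b) (hf : ContinuousOn f (Icc a b))
    (hg : ContinuousOn g (Icc a b))
    (h : ∀ s ∈ Icc a b, ∫ x in a..s, f x = ∫ x in a..s, g x) : EqOn f g (Icc a b) :=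
  fun t ht => (uniqueDiffOn_Icc hab t ht).eq_deriv _ (hf.hasDerivWithinAt_integral_Icc ht)
    ((hg.hasDerivWithinAt_integral_Icc ht).congr_of_mem h ht)

end IntervalIntegral

theorem ContinuousOn.comp_prodMk_const {α β γ : Type*} [TopologicalSpace α]
    [TopologicalSpace β] [TopologicalSpace γ] {F : α → β → γ} {s : Set α}
    (hF : ContinuousOn (Function.uncurry F) (s ×ˢ (univ : Set β))) (v : β) :
    ContinuousOn (fun t => F t v) s :=
  hF.comp (continuous_id.prodMk continuous_const).continuousOn fun _ ht => ⟨ht, mem_univ v⟩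

/-- If two continuous right-hand sides `F, G : [t_st, t_end] × ℝⁿ → ℝⁿ`
induce the same transition functional
`f(s, y) = y(t_st) + ∫_{t_st}^s F(τ, y(τ)) dτ` (over all continuous `y` and
all `s ∈ [t_st, t_end]`), then `F = G` on `[t_st, t_end] × ℝⁿ`: the map
`F ↦ f` is injective. -/
theorem rhs_determined_by_transition (n : ℕ) (tst tend : ℝ) (h : tst < tend)
    (F G : ℝ → EuclideanSpace ℝ (Fin n) → EuclideanSpace ℝ (Fin n))
    (hF : ContinuousOn (Function.uncurry F)
      (Set.Icc tst tend ×ˢ (Set.univ : Set (EuclideanSpace ℝ (Fin n)))))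
    (hG : ContinuousOn (Function.uncurry G)
      (Set.Icc tst tend ×ˢ (Set.univ : Set (EuclideanSpace ℝ (Fin n)))))
    (heq : ∀ y : ℝ → EuclideanSpace ℝ (Fin n), ContinuousOn y (Set.Icc tst tend) →
      ∀ s ∈ Set.Icc tst tend,
        y tst + ∫ τ in tst..s, F τ (y τ) = y tst + ∫ τ in tst..s, G τ (y τ)) :
    ∀ t ∈ Set.Icc tst tend, ∀ v : EuclideanSpace ℝ (Fin n), F t v = G t v := by
  intro t ht v
  refine EqOn.of_integral_eq h (hF.comp_prodMk_const v) (hG.comp_prodMk_const v)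
    (fun s hs => ?_) ht
  exact add_left_cancel (heq (fun _ => v) continuousOn_const s hs)
end
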